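/- arXiv:quant-ph/0703213 — 2 statements merged into one kernel-verified Lean document; each statement's English description precedes it below -/
import Mathlib

section
/- Let q be a prime power with characteristic p, and let C ⊆ F_q^{2n} be an F_q-linear code. For vectors u=(a|b) ∈ C and v=(a'|b') ∈ F_q^{2n}, the trace-symplectic product Tr_{q/p}(a'·b − a·b') vanishes for all u ∈ C if and only if the symplectic product a'·b − a·b' vanishes for all u ∈ C. Consequently the trace-symplectic dual of C equals its symplectic dual: C^{⊥_t} = C^{⊥_s}. -/
set_option linter.unusedSectionVars false

open Finset

variable {F : Type*} [Field F] [Fintype F]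

/-- Euclidean dot product. -/
def dotp {ι : Type*} [Fintype ι] (a b : ι → F) : F := ∑ i, a i * b i

/-- Symplectic product of u=(a|b), v=(a'|b'): a'·b − a·b'. -/
def sform {ι : Type*} [Fintype ι] (u v : (ι → F) × (ι → F)) : F :=
  dotp v.1 u.2 - dotp u.1 v.2

lemma dotp_add_right {ι : Type*} [Fintype ι] (a b c : ι → F) :
    dotp a (b + c) = dotp a b + dotp a c := by
  simp [dotp, mul_add, Finset.sum_add_distrib]

lemma dotp_add_left {ι : Type*} [Fintype ι] (a b c : ι → F) :
    dotp (a + b) c = dotp a c + dotp b c := by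
  simp [dotp, add_mul, Finset.sum_add_distrib]

lemma dotp_smul_right {ι : Type*} [Fintype ι] (r : F) (a b : ι → F) :
    dotp a (r • b) = r * dotp a b := by
  simp only [dotp, Pi.smul_apply, smul_eq_mul, Finset.mul_sum]
  exact Finset.sum_congr rfl fun i _ => by ring

lemma dotp_smul_left {ι : Type*} [Fintype ι] (r : F) (a b : ι → F) :
    dotp (r • a) b = r * dotp a b := by
  simp only [dotp, Pi.smul_apply, smul_eq_mul, Finset.mul_sum]
  exact Finset.sum_congr rfl fun i _ => by ring

/-- Euclidean dual of a code. -/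
def eperp {ι : Type*} [Fintype ι] (X : Submodule F (ι → F)) : Submodule F (ι → F) where
  carrier := {y | ∀ x ∈ X, dotp x y = 0}
  add_mem' := by
    intro a b ha hb x hx
    rw [dotp_add_right, ha x hx, hb x hx, add_zero]
  zero_mem' := by intro x hx; simp [dotp]
  smul_mem' := by
    intro r a ha x hx
    rw [dotp_smul_right, ha x hx, mul_zero]

/-- Symplectic dual of a code. -/
def sperp {ι : Type*} [Fintype ι] (C : Submodule F ((ι → F) × (ι → F))) :
    Submodule F ((ι → F) × (ι → F)) where
  carrier := {x | ∀ y ∈ C, sform y x = 0}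
  add_mem' := by
    intro a b ha hb y hy
    have h1 := ha y hy; have h2 := hb y hy
    simp only [sform, Prod.fst_add, Prod.snd_add, dotp_add_left, dotp_add_right] at *
    linear_combination h1 + h2
  zero_mem' := by intro y hy; simp [sform, dotp]
  smul_mem' := by
    intro r a ha y hy
    have h := ha y hy
    simp only [sform, Prod.smul_fst, Prod.smul_snd, dotp_smul_left, dotp_smul_right] at *
    linear_combination r * h

/-- Symplectic weight. -/
def swt {ι : Type*} [Fintype ι] [DecidableEq F] (u : (ι → F) × (ι → F)) : ℕ :=
  (Finset.univ.filter fun i => ¬(u.1 i = 0 ∧ u.2 i = 0)).card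

/-- Tensor product of codes. -/
def tcode {ι κ : Type*} [Fintype ι] [Fintype κ] (A : Submodule F (ι → F))
    (B : Submodule F (κ → F)) : Submodule F (ι × κ → F) :=
  Submodule.span F {w | ∃ a ∈ A, ∃ b ∈ B, w = fun p => a p.1 * b p.2}

/-- `C` is stable under scaling by `L`, so `trace (r * f u) = 0` for every `r : L`, and the
trace form is nondegenerate. -/
theorem Submodule.forall_trace_comp_eq_zero_iff {K L M : Type*} [Field K] [Field L] [Algebra K L]
    [FiniteDimensional K L] [Algebra.IsSeparable K L] [AddCommMonoid M] [Module L M]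
    (C : Submodule L M) (f : M →ₗ[L] L) :
    (∀ u ∈ C, Algebra.trace K L (f u) = 0) ↔ ∀ u ∈ C, f u = 0 := by
  refine ⟨fun h u hu => (traceForm_nondegenerate K L).1 (f u) fun r => ?_,
    fun h u hu => by rw [h u hu, map_zero]⟩
  rw [Algebra.traceForm_apply, mul_comm, ← smul_eq_mul, ← map_smul]
  exact h (r • u) (C.smul_mem r hu)

def sformLeft {ι : Type*} [Fintype ι] (v : (ι → F) × (ι → F)) :
    ((ι → F) × (ι → F)) →ₗ[F] F where
  toFun u := sform u v
  map_add' u w := by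
    simp only [sform, Prod.fst_add, Prod.snd_add, dotp_add_left, dotp_add_right]
    ring
  map_smul' r u := by
    simp only [sform, Prod.smul_fst, Prod.smul_snd, dotp_smul_left, dotp_smul_right,
      RingHom.id_apply, smul_eq_mul]
    ring

theorem trace_symplectic_dual_eq_symplectic_dual_general
    {p : ℕ} [Fact p.Prime] {F : Type*} [Field F] [Fintype F]
    [Algebra (ZMod p) F] {n : ℕ}
    (C : Submodule F ((Fin n → F) × (Fin n → F))) :
    (∀ x : (Fin n → F) × (Fin n → F),
      ((∀ u ∈ C, Algebra.trace (ZMod p) F (sform u x) = 0) ↔ (∀ u ∈ C, sform u x = 0))) ∧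
    {x : (Fin n → F) × (Fin n → F) | ∀ u ∈ C, Algebra.trace (ZMod p) F (sform u x) = 0}
      = (sperp C : Set ((Fin n → F) × (Fin n → F))) := by
  have : FiniteDimensional (ZMod p) F := Module.Finite.of_finite
  -- `Algebra.IsSeparable (ZMod p) F` is found as an instance: finite fields are perfect.
  have trace_iff (x : (Fin n → F) × (Fin n → F)) :=
    C.forall_trace_comp_eq_zero_iff (K := ZMod p) (sformLeft x)
  exact ⟨trace_iff, Set.ext trace_iff⟩

/-- For an `F_q`-linear code `C ⊆ F_q^{2n}`, the trace-symplectic product of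
all elements of `C` with a fixed vector `x` vanishes iff the symplectic product does;
consequently the trace-symplectic dual of `C` equals its symplectic dual. -/
theorem trace_symplectic_dual_eq_symplectic_dual
    {p : ℕ} [Fact p.Prime] {F : Type*} [Field F] [Fintype F] [CharP F p]
    [Algebra (ZMod p) F] {n : ℕ}
    (C : Submodule F ((Fin n → F) × (Fin n → F))) :
    (∀ x : (Fin n → F) × (Fin n → F),
      ((∀ u ∈ C, Algebra.trace (ZMod p) F (sform u x) = 0) ↔ (∀ u ∈ C, sform u x = 0))) ∧
    {x : (Fin n → F) × (Fin n → F) | ∀ u ∈ C, Algebra.trace (ZMod p) F (sform u x) = 0}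
      = (sperp C : Set ((Fin n → F) × (Fin n → F))) :=
  trace_symplectic_dual_eq_symplectic_dual_general C
end

section
/- With C = (F_q^{n_1} ⊗ C_2^⊥) × (C_1^⊥ ⊗ F_q^{n_2}) and C^{⊥_s} = (C_1 ⊗ F_q^{n_2}) × (F_q^{n_1} ⊗ C_2) as above, the intersection D = C ∩ C^{⊥_s} equals (C_1 ⊗ C_2^⊥) × (C_1^⊥ ⊗ C_2), and dim D = k_1(n_2 − k_2) + k_2(n_1 − k_1). Consequently dim C − dim D = 2(n_1−k_1)(n_2−k_2) and dim C^{⊥_s} − dim D = 2 k_1 k_2. -/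
set_option linter.unusedSectionVars false

open Finset

variable {F : Type*} [Field F] [Fintype F]

/-! A matrix lies in `A ⊗ B` exactly when its columns lie in `A` and its rows lie in `B`: if `P`
is a linear projection onto `A`, applying `P` to every column fixes such a matrix `w` and rewrites
it as `∑ i, P eᵢ ⊗ (row i of w)`. Hence `(F^{n₁} ⊗ B) ∩ (A ⊗ F^{n₂}) = A ⊗ B`, which computes the
intersection componentwise. For the dimensions, `a ⊗ b ↦ (aᵢ bⱼ)` identifies the abstract tensor
product `A ⊗_F B` with the code `A ⊗ B`, so `dim (A ⊗ B) = dim A · dim B`, and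
`dim C^⊥ = n - dim C` by nondegeneracy of the dot product. -/

open Module Submodule TensorProduct

section Field

variable {K : Type*} [Field K] {ι κ : Type*} [Fintype ι] [Fintype κ]

lemma finrank_submodule_prod {M N : Type*} [AddCommGroup M] [AddCommGroup N] [Module K M]
    [Module K N] (p : Submodule K M) (q : Submodule K N) [FiniteDimensional K p]
    [FiniteDimensional K q] :
    finrank K (p.prod q) = finrank K p + finrank K q := by
  have h := LinearMap.finrank_range_of_inj (f := p.subtype.prodMap q.subtype)
    (p.injective_subtype.prodMap q.injective_subtype)
  rwa [LinearMap.range_prodMap, range_subtype, range_subtype, finrank_prod] at h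

lemma dotProductBilin_nondegenerate :
    (dotProductBilin K K : LinearMap.BilinForm K (ι → K)).Nondegenerate := by
  classical
  have hrefl : (dotProductBilin K K : LinearMap.BilinForm K (ι → K)).IsRefl :=
    fun x y h => by simpa [dotProduct_comm] using h
  refine hrefl.nondegenerate_iff_separatingLeft.mpr fun x hx => funext fun i => ?_
  simpa using hx (Pi.single i 1)

lemma finrank_eperp [Fintype K] (X : Submodule K (ι → K)) :
    finrank K (eperp X) = Fintype.card ι - finrank K X := by
  rw [show eperp X = LinearMap.BilinForm.orthogonal (dotProductBilin K K) X from rfl,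
    LinearMap.BilinForm.finrank_orthogonal dotProductBilin_nondegenerate, finrank_pi]

open scoped Classical in
variable (K ι κ) in
noncomputable def tensorPiEquiv : (ι → K) ⊗[K] (κ → K) ≃ₗ[K] (ι × κ → K) :=
  TensorProduct.comm K _ _ ≪≫ₗ piScalarRight K K (κ → K) ι ≪≫ₗ (LinearEquiv.curry K K ι κ).symm

@[simp]
lemma tensorPiEquiv_tmul (a : ι → K) (b : κ → K) :
    tensorPiEquiv K ι κ (a ⊗ₜ b) = fun p => a p.1 * b p.2 := by
  funext p
  simp [tensorPiEquiv, Function.uncurry]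

lemma tcode_eq_range (A : Submodule K (ι → K)) (B : Submodule K (κ → K)) :
    tcode A B = LinearMap.range ((tensorPiEquiv K ι κ).toLinearMap ∘ₗ mapIncl A B) := by
  rw [LinearMap.range_comp, range_map_eq_span_tmul, map_span, tcode]
  congr 1
  ext w
  simp [eq_comm, and_assoc]

lemma finrank_tcode (A : Submodule K (ι → K)) (B : Submodule K (κ → K)) :
    finrank K (tcode A B) = finrank K A * finrank K B := by
  rw [tcode_eq_range, LinearMap.finrank_range_of_inj, finrank_tensorProduct]
  exact (tensorPiEquiv K ι κ).injective.comp
    (map_injective_of_flat_flat _ _ A.injective_subtype B.injective_subtype)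

variable (ι) in
def rowsIn (B : Submodule K (κ → K)) : Submodule K (ι × κ → K) :=
  ⨅ i : ι, B.comap (LinearMap.funLeft K K (Prod.mk i))

variable (κ) in
def colsIn (A : Submodule K (ι → K)) : Submodule K (ι × κ → K) :=
  ⨅ j : κ, A.comap (LinearMap.funLeft K K fun i => (i, j))

lemma mem_rowsIn {B : Submodule K (κ → K)} {w : ι × κ → K} :
    w ∈ rowsIn ι B ↔ ∀ i, (fun j => w (i, j)) ∈ B := by
  simp only [rowsIn, mem_iInf, mem_comap]
  rfl

lemma mem_colsIn {A : Submodule K (ι → K)} {w : ι × κ → K} :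
    w ∈ colsIn κ A ↔ ∀ j, (fun i => w (i, j)) ∈ A := by
  simp only [colsIn, mem_iInf, mem_comap]
  rfl

lemma tcode_le_rowsIn (A : Submodule K (ι → K)) (B : Submodule K (κ → K)) :
    tcode A B ≤ rowsIn ι B := by
  refine span_le.mpr ?_
  rintro _ ⟨a, -, b, hb, rfl⟩
  exact mem_rowsIn.mpr fun i => B.smul_mem (a i) hb

lemma tcode_le_colsIn (A : Submodule K (ι → K)) (B : Submodule K (κ → K)) :
    tcode A B ≤ colsIn κ A := by
  refine span_le.mpr ?_
  rintro _ ⟨a, ha, b, -, rfl⟩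
  refine mem_colsIn.mpr fun j => ?_
  have hcol : (fun i => a i * b j) = b j • a := funext fun _ => mul_comm _ _
  exact hcol ▸ A.smul_mem (b j) ha

lemma colsIn_inf_rowsIn_le_tcode (A : Submodule K (ι → K)) (B : Submodule K (κ → K)) :
    colsIn κ A ⊓ rowsIn ι B ≤ tcode A B := by
  classical
  obtain ⟨r, hr⟩ := LinearMap.exists_extend (LinearMap.id : A →ₗ[K] A)
  set P := A.subtype ∘ₗ r
  have hP : ∀ x ∈ A, P x = x := fun x hx => congrArg Subtype.val (LinearMap.congr_fun hr ⟨x, hx⟩)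
  rintro w ⟨hcol, hrow⟩
  have hw : w = ∑ i, fun p : ι × κ => P (Pi.single i 1) p.1 * w (i, p.2) := by
    funext ⟨i, j⟩
    have hsingle (i' : ι) : (fun i => if i' = i then (1 : K) else 0) = Pi.single i' 1 :=
      funext fun i => by simp [Pi.single_apply, eq_comm]
    have hcolj := congrFun (LinearMap.pi_apply_eq_sum_univ P fun i => w (i, j)) i
    rw [hP _ (mem_colsIn.mp hcol j)] at hcolj
    simp [hcolj, hsingle, Finset.sum_apply, mul_comm]
  rw [hw]
  exact sum_mem fun i _ => subset_span ⟨_, (r _).2, _, mem_rowsIn.mp hrow i, rfl⟩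

lemma tcode_mono {A A' : Submodule K (ι → K)} {B B' : Submodule K (κ → K)}
    (hA : A ≤ A') (hB : B ≤ B') : tcode A B ≤ tcode A' B' :=
  span_mono fun _ ⟨a, ha, b, hb, hw⟩ => ⟨a, hA ha, b, hB hb, hw⟩

lemma tcode_top_inf_tcode_top (A : Submodule K (ι → K)) (B : Submodule K (κ → K)) :
    tcode ⊤ B ⊓ tcode A ⊤ = tcode A B :=
  le_antisymm
    (fun _ hw => colsIn_inf_rowsIn_le_tcode A B ⟨tcode_le_colsIn A ⊤ hw.2, tcode_le_rowsIn ⊤ B hw.1⟩)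
    (le_inf (tcode_mono le_top le_rfl) (tcode_mono le_rfl le_top))

end Field

/-- with `C = (F_q^{n_1} ⊗ C_2^⊥) × (C_1^⊥ ⊗ F_q^{n_2})` and
`C^{⊥_s} = (C_1 ⊗ F_q^{n_2}) × (F_q^{n_1} ⊗ C_2)`, the intersection
`D = C ∩ C^{⊥_s}` is `(C_1 ⊗ C_2^⊥) × (C_1^⊥ ⊗ C_2)` with
`dim D = k_1(n_2−k_2) + k_2(n_1−k_1)`; hence
`dim C − dim D = 2(n_1−k_1)(n_2−k_2)` and `dim C^{⊥_s} − dim D = 2 k_1 k_2`. -/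
theorem lattice_code_gauge {n1 n2 : ℕ}
    (C1 : Submodule F (Fin n1 → F)) (C2 : Submodule F (Fin n2 → F)) (k1 k2 : ℕ)
    (h1 : Module.finrank F C1 = k1) (h2 : Module.finrank F C2 = k2) :
    ((tcode (⊤ : Submodule F (Fin n1 → F)) (eperp C2)).prod
        (tcode (eperp C1) (⊤ : Submodule F (Fin n2 → F))))
      ⊓ ((tcode C1 (⊤ : Submodule F (Fin n2 → F))).prod
          (tcode (⊤ : Submodule F (Fin n1 → F)) C2))
      = (tcode C1 (eperp C2)).prod (tcode (eperp C1) C2) ∧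
    Module.finrank F ↥((tcode C1 (eperp C2)).prod (tcode (eperp C1) C2))
      = k1 * (n2 - k2) + k2 * (n1 - k1) ∧
    Module.finrank F ↥((tcode (⊤ : Submodule F (Fin n1 → F)) (eperp C2)).prod
        (tcode (eperp C1) (⊤ : Submodule F (Fin n2 → F))))
      = Module.finrank F ↥((tcode C1 (eperp C2)).prod (tcode (eperp C1) C2))
        + 2 * ((n1 - k1) * (n2 - k2)) ∧
    Module.finrank F ↥((tcode C1 (⊤ : Submodule F (Fin n2 → F))).prod
        (tcode (⊤ : Submodule F (Fin n1 → F)) C2))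
      = Module.finrank F ↥((tcode C1 (eperp C2)).prod (tcode (eperp C1) C2))
        + 2 * (k1 * k2) := by
  refine ⟨?_, ?_⟩
  · rw [prod_inf_prod, tcode_top_inf_tcode_top, inf_comm, tcode_top_inf_tcode_top]
  have hk1 : k1 ≤ n1 := by simpa [h1] using C1.finrank_le
  have hk2 : k2 ≤ n2 := by simpa [h2] using C2.finrank_le
  simp only [finrank_submodule_prod, finrank_tcode, finrank_eperp, finrank_top, finrank_fin_fun,
    Fintype.card_fin, h1, h2]
  zify [hk1, hk2]
  exact ⟨by ring, by ring, by ring⟩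
end
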